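/- arXiv:2206.09695 — 3 statements merged into one kernel-verified Lean document; each statement's English description precedes it below -/
import Mathlib

section
/- For k ≡ 0 (mod 4) and odd t ≥ 3, the tensor product K_{k+1} × K_t admits a partial C_k-factorization: its edge set can be partitioned into (k+1)(t−1)/2 partial C_k-factors, where each partial C_k-factor is a 2-regular subgraph spanning all vertices outside one part whose components are all k-cycles. -/
open SimpleGraph

/-- The tensor product `K_u × K_g`: vertices `(i,a)` and `(j,b)` are adjacent
iff `i ≠ j` and `a ≠ b`. -/
def tensorK (u g : ℕ) : SimpleGraph (Fin u × Fin g) where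
  Adj x y := x.1 ≠ y.1 ∧ x.2 ≠ y.2
  symm := ⟨fun x y h => ⟨h.1.symm, h.2.symm⟩⟩
  loopless := ⟨fun x h => h.1 rfl⟩

/-- `H` restricted to `S` is a disjoint union of `k`-cycles covering exactly the
vertices of `S`: the support of `H` is `S`, every vertex of `S` has exactly two
neighbours, and every connected component meeting `S` has exactly `k` vertices
(a finite connected 2-regular graph on `k` vertices is a `k`-cycle). -/
def IsUnionOfCycles {V : Type*} (H : SimpleGraph V) (S : Set V) (k : ℕ) : Prop :=
  (∀ v, v ∈ S ↔ (H.neighborSet v).Nonempty) ∧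
  (∀ v ∈ S, (H.neighborSet v).ncard = 2) ∧
  (∀ v ∈ S, {w | H.Reachable v w}.ncard = k)

/-- `H` is a partial `C_k`-factor of `G` (a graph on `[u] × [g]` with parts
`V_i = {i} × [g]`): it is a subgraph of `G` which is a disjoint union of
`k`-cycles covering all vertices outside exactly one part. -/
def IsPartialCkFactor {u g : ℕ} (G H : SimpleGraph (Fin u × Fin g)) (k : ℕ) : Prop :=
  H ≤ G ∧ ∃ i : Fin u, IsUnionOfCycles H {x | x.1 ≠ i} k

/-- A `k`-almost resolvable cycle system of `(K_u × K_g)(lam)` with `n` partial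
`C_k`-factors: every member of the family is a partial `C_k`-factor and every
edge of `K_u × K_g` lies in exactly `lam` of them. -/
def IsARCS (u g lam k n : ℕ) (H : Fin n → SimpleGraph (Fin u × Fin g)) : Prop :=
  (∀ m, IsPartialCkFactor (tensorK u g) (H m) k) ∧
  ∀ x y, (tensorK u g).Adj x y → ({m | (H m).Adj x y} : Set (Fin n)).ncard = lam

/-!
Write `k = 4u`, `t = 2τ + 1` and read the vertices as `ℤ_{4u+1} × ℤ_t`. A `4u`-cycle `P` on
`ℤ_{4u+1} ∖ {0}` whose edge lengths `c_m = ±(P(m+1) - P(m))` run once through `1, …, 4u` is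
lifted to `ℤ_{4u+1} × ℤ_t` with second coordinates alternating `0, σ`, so that its `m`-th edge
has difference `±(c_m, σ)`. For `σ = 1, …, τ` these pairs contain exactly one of `d, -d` for
every `d` with both coordinates nonzero, i.e. for every edge difference of `K_{4u+1} × K_t`.
Hence the translates of the `τ` lifted cycles by `ℤ_{4u+1} × ℤ_t` partition the edges, and for
fixed `i` the translates by `{i} × ℤ_t` form a partial `C_{4u}`-factor missing the part `i`.
-/

open Function

lemma Set.range_eq_compl_singleton_of_injective {α β : Type*} [Finite β] {f : α → β} {b : β}
    (hf : Injective f) (hb : ∀ a, f a ≠ b) (hcard : Nat.card β = Nat.card α + 1) :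
    Set.range f = {b}ᶜ := by
  have : Finite α := Finite.of_injective f hf
  refine Set.eq_of_subset_of_ncard_le (by rintro _ ⟨a, rfl⟩; exact hb a) ?_
  rw [Set.ncard_compl, Set.ncard_singleton, Set.ncard_range_of_injective hf, hcard,
    Nat.add_sub_cancel]

lemma ZMod.val_add_one_of_one_lt {n : ℕ} [NeZero n] (hn : 1 < n) (m : ZMod n) :
    (m + 1).val = (m.val + 1) % n := by
  rw [ZMod.val_add, ZMod.val_one_eq_one_mod, Nat.mod_eq_of_lt hn]

lemma ZMod.val_add_one_mod_two {n : ℕ} [NeZero n] (hn : Even n) (m : ZMod n) :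
    (m + 1).val % 2 = (m.val + 1) % 2 := by
  obtain ⟨r, rfl⟩ := hn
  have hr : 0 < r := Nat.pos_of_ne_zero fun h => NeZero.ne (r + r) (by omega)
  rw [ZMod.val_add_one_of_one_lt (by omega)]
  have := m.val_lt
  rcases (show m.val + 1 < r + r ∨ m.val + 1 = r + r by omega) with h | h
  · rw [Nat.mod_eq_of_lt h]
  · rw [h, Nat.mod_self]; omega

lemma ZMod.ne_neg_self_of_odd {n : ℕ} (hn : Odd n) {a : ZMod n} (ha : a ≠ 0) : a ≠ -a := by
  intro h
  rcases (ZMod.neg_eq_self_iff a).1 h.symm with h0 | h2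
  · exact ha h0
  · obtain ⟨r, rfl⟩ := hn; omega

lemma eq_or_eq_neg_iff_of_eq_or_eq_neg {G : Type*} [InvolutiveNeg G] {a v d : G}
    (h : a = v ∨ a = -v) : (a = d ∨ a = -d) ↔ (v = d ∨ v = -d) := by
  rcases h with rfl | rfl
  · rfl
  · rw [neg_eq_iff_eq_neg, neg_inj, or_comm]

lemma ZMod.eq_of_intCast_eq_of_abs_sub_lt {N : ℕ} {a b : ℤ} (h : (a : ZMod N) = b)
    (hab : |a - b| < N) : a = b := by
  have := Int.eq_zero_of_abs_lt_dvd ((ZMod.intCast_eq_intCast_iff_dvd_sub b a N).1 h.symm) hab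
  omega

lemma existsUnique_pair_eq_or_eq_neg {α β M J : Type*} [AddCommGroup α] [AddCommGroup β]
    {C : M → α} {σ : J → β} (hC : Injective C) (hCr : {0}ᶜ ⊆ Set.range C)
    (hσ : ∀ E ≠ 0, ∃! j, σ j = E ∨ σ j = -E) (hβ : ∀ E : β, E ≠ 0 → E ≠ -E)
    {d : α × β} (hd1 : d.1 ≠ 0) (hd2 : d.2 ≠ 0) :
    ∃! q : J × M, (C q.2, σ q.1) = d ∨ (C q.2, σ q.1) = -d := by
  have hrange : ∀ D ≠ 0, ∃ m, C m = D := fun D hD => hCr hD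
  refine existsUnique_of_exists_of_unique ?_ ?_
  · obtain ⟨j, hj, -⟩ := hσ d.2 hd2
    rcases hj with hj | hj
    · obtain ⟨m, hm⟩ := hrange d.1 hd1
      exact ⟨(j, m), Or.inl (Prod.ext hm hj)⟩
    · obtain ⟨m, hm⟩ := hrange (-d.1) (neg_ne_zero.2 hd1)
      exact ⟨(j, m), Or.inr (Prod.ext hm hj)⟩
  · have snd : ∀ q : J × M, ((C q.2, σ q.1) = d ∨ (C q.2, σ q.1) = -d) →
        σ q.1 = d.2 ∨ σ q.1 = -d.2 := by
      rintro q (h | h)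
      · exact Or.inl (congrArg Prod.snd h)
      · exact Or.inr (congrArg Prod.snd h)
    rintro ⟨j, m⟩ ⟨j', m'⟩ hq hq'
    obtain rfl : j = j' := (hσ d.2 hd2).unique (snd _ hq) (snd _ hq')
    simp only [Prod.ext_iff, Prod.fst_neg, Prod.snd_neg] at hq hq'
    rcases hq with hq | hq <;> rcases hq' with hq' | hq'
    · rw [hC (hq.1.trans hq'.1.symm)]
    · exact absurd (hq.2.symm.trans hq'.2) (hβ _ hd2)
    · exact absurd (hq'.2.symm.trans hq.2) (hβ _ hd2)
    · rw [hC (hq.1.trans hq'.1.symm)]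

namespace PartialCycleFactorization

section CycleUnion

variable {V A : Type*} {n : ℕ}

def cycleUnion (Φ : ZMod n × A → V) : SimpleGraph V :=
  fromRel fun x y => ∃ p : ZMod n × A, x = Φ p ∧ y = Φ (p.1 + 1, p.2)

variable {Φ : ZMod n × A → V}

lemma cycleUnion_adj_iff {x y : V} :
    (cycleUnion Φ).Adj x y ↔ x ≠ y ∧ ∃ p : ZMod n × A,
      (x = Φ p ∧ y = Φ (p.1 + 1, p.2)) ∨ (y = Φ p ∧ x = Φ (p.1 + 1, p.2)) := by
  simp only [cycleUnion, fromRel_adj, ← exists_or]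

lemma cycleUnion_adj_succ (hΦ : Injective Φ) (hn : 1 < n) (m : ZMod n) (a : A) :
    (cycleUnion Φ).Adj (Φ (m, a)) (Φ (m + 1, a)) := by
  have : Fact (1 < n) := ⟨hn⟩
  have : (1 : ZMod n) ≠ 0 := one_ne_zero
  refine cycleUnion_adj_iff.2 ⟨fun h => this ?_, (m, a), Or.inl ⟨rfl, rfl⟩⟩
  simpa using congrArg Prod.fst (hΦ h)

lemma neighborSet_cycleUnion (hΦ : Injective Φ) (hn : 1 < n) (m : ZMod n) (a : A) :
    (cycleUnion Φ).neighborSet (Φ (m, a)) = {Φ (m + 1, a), Φ (m - 1, a)} := by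
  ext y
  simp only [mem_neighborSet, Set.mem_insert_iff, Set.mem_singleton_iff]
  constructor
  · rintro hy
    obtain ⟨-, p, ⟨hx, rfl⟩ | ⟨rfl, hx⟩⟩ := cycleUnion_adj_iff.1 hy
    · obtain rfl := hΦ hx
      exact Or.inl rfl
    · obtain ⟨hm, ha⟩ := Prod.ext_iff.1 (hΦ hx)
      simp only at hm ha
      right; rw [hm, ha, add_sub_cancel_right]
  · rintro (rfl | rfl)
    · exact cycleUnion_adj_succ hΦ hn m a
    · simpa using (cycleUnion_adj_succ hΦ hn (m - 1) a).symm

lemma ncard_neighborSet_cycleUnion (hΦ : Injective Φ) (hn : 3 ≤ n) (m : ZMod n) (a : A) :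
    ((cycleUnion Φ).neighborSet (Φ (m, a))).ncard = 2 := by
  rw [neighborSet_cycleUnion hΦ (by omega), Set.ncard_pair]
  intro h
  have h2 : ((2 : ℕ) : ZMod n) = 0 := by
    have := congrArg Prod.fst (hΦ h)
    simp only at this
    push_cast
    linear_combination this
  rw [ZMod.natCast_eq_zero_iff] at h2
  exact absurd (Nat.le_of_dvd two_pos h2) (by omega)

lemma reachable_cycleUnion_iff [NeZero n] (hΦ : Injective Φ) (hn : 1 < n) (m : ZMod n) (a : A)
    (w : V) :
    (cycleUnion Φ).Reachable (Φ (m, a)) w ↔ ∃ m', Φ (m', a) = w := by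
  constructor
  · rw [reachable_iff_reflTransGen]
    intro h
    induction h with
    | refl => exact ⟨m, rfl⟩
    | tail _ hadj ih =>
      obtain ⟨m', rfl⟩ := ih
      have := (neighborSet_cycleUnion hΦ hn m' a).subset hadj
      rcases this with h | h
      · exact ⟨_, h.symm⟩
      · exact ⟨_, (Set.mem_singleton_iff.1 h).symm⟩
  · rintro ⟨m', rfl⟩
    have step : ∀ j : ℕ, (cycleUnion Φ).Reachable (Φ (m, a)) (Φ (m + j, a)) := by
      intro j
      induction j with
      | zero => simp
      | succ j ih =>
        simpa [add_assoc] using ih.trans (cycleUnion_adj_succ hΦ hn (m + j) a).reachable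
    simpa using step (m' - m).val

lemma mem_range_iff_neighborSet_nonempty (hΦ : Injective Φ) (hn : 1 < n) (x : V) :
    x ∈ Set.range Φ ↔ ((cycleUnion Φ).neighborSet x).Nonempty := by
  constructor
  · rintro ⟨⟨m, a⟩, rfl⟩
    exact ⟨_, cycleUnion_adj_succ hΦ hn m a⟩
  · rintro ⟨y, hy⟩
    obtain ⟨-, p, ⟨rfl, -⟩ | ⟨-, rfl⟩⟩ := cycleUnion_adj_iff.1 hy <;> exact ⟨_, rfl⟩

lemma isUnionOfCycles_cycleUnion (hΦ : Injective Φ) (hn : 3 ≤ n) :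
    IsUnionOfCycles (cycleUnion Φ) (Set.range Φ) n := by
  refine ⟨mem_range_iff_neighborSet_nonempty hΦ (by omega), ?_, ?_⟩
  · rintro _ ⟨⟨m, a⟩, rfl⟩
    exact ncard_neighborSet_cycleUnion hΦ hn m a
  · have : NeZero n := ⟨by omega⟩
    rintro _ ⟨⟨m, a⟩, rfl⟩
    have : {w | (cycleUnion Φ).Reachable (Φ (m, a)) w} = Set.range fun m' => Φ (m', a) :=
      Set.ext (reachable_cycleUnion_iff hΦ (by omega) m a)
    have hinj : Injective fun m' : ZMod n => Φ (m', a) := fun _ _ h => by simpa using hΦ h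
    rw [this, Set.ncard_range_of_injective hinj, Nat.card_zmod]

end CycleUnion

section Translates

variable {α β : Type*} [AddCommGroup α] [AddCommGroup β] {n : ℕ}

def translates (B : ZMod n → α × β) (i : α) : SimpleGraph (α × β) :=
  cycleUnion fun p : ZMod n × β => (i, p.2) + B p.1

variable {B : ZMod n → α × β}

lemma injective_translate (hB : Injective fun m => (B m).1) (i : α) :
    Injective fun p : ZMod n × β => (i, p.2) + B p.1 := by
  rintro ⟨m, a⟩ ⟨m', a'⟩ h
  have hm : m = m' := hB (by simpa using congrArg Prod.fst h)
  subst hm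
  simpa using h

lemma range_translate (i : α) :
    Set.range (fun p : ZMod n × β => (i, p.2) + B p.1) =
      {x | x.1 - i ∈ Set.range fun m => (B m).1} := by
  ext x
  constructor
  · rintro ⟨⟨m, a⟩, rfl⟩
    exact ⟨m, by simp⟩
  · rintro ⟨m, hm⟩
    exact ⟨(m, x.2 - (B m).2), Prod.ext (by simp [hm]) (by simp)⟩

lemma exists_translate_iff (i : α) (m : ZMod n) (x y : α × β) :
    (∃ a, x = (i, a) + B m ∧ y = (i, a) + B (m + 1)) ↔
      y - x = B (m + 1) - B m ∧ (x - B m).1 = i := by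
  constructor
  · rintro ⟨a, rfl, rfl⟩
    exact ⟨by abel, by simp⟩
  · rintro ⟨hd, hi⟩
    refine ⟨(x - B m).2, Prod.ext (by simp [← hi]) (by simp), ?_⟩
    rw [eq_sub_iff_add_eq] at hd
    rw [← hd, ← hi]
    ext <;> simp

lemma translates_adj_iff {i : α} {x y : α × β} (hxy : x ≠ y) :
    (translates B i).Adj x y ↔ ∃ m,
      (y - x = B (m + 1) - B m ∧ (x - B m).1 = i) ∨
      (x - y = B (m + 1) - B m ∧ (y - B m).1 = i) := by
  simp only [translates, cycleUnion_adj_iff, hxy, ne_eq, not_false_eq_true, true_and,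
    Prod.exists, exists_or, ← exists_translate_iff]

lemma existsUnique_translates_adj {J : Type*} {B : J → ZMod n → α × β} {d : α × β}
    (hd : d ≠ -d)
    (hB : ∃! q : J × ZMod n,
      B q.1 (q.2 + 1) - B q.1 q.2 = d ∨ B q.1 (q.2 + 1) - B q.1 q.2 = -d)
    {x y : α × β} (hxy : y - x = d) :
    ∃! q : α × J, (translates (B q.2) q.1).Adj x y := by
  have hne : x ≠ y := by
    rintro rfl
    simp only [sub_self] at hxy
    exact hd (by simp [← hxy])
  have hyx : x - y = -d := by rw [← hxy, neg_sub]
  simp only [translates_adj_iff hne, hxy, hyx]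
  obtain ⟨⟨j, m⟩, hjm, huniq⟩ := hB
  rcases hjm with h | h
  · refine ⟨((x - B j m).1, j), ⟨m, Or.inl ⟨h.symm, rfl⟩⟩, ?_⟩
    rintro ⟨i', j'⟩ ⟨m', ⟨h', hi⟩ | ⟨h', hi⟩⟩ <;> dsimp only at h' hi
    · obtain ⟨rfl, rfl⟩ := Prod.ext_iff.1 (huniq (j', m') (Or.inl h'.symm))
      rw [← hi]
    · obtain ⟨rfl, rfl⟩ := Prod.ext_iff.1 (huniq (j', m') (Or.inr h'.symm))
      exact absurd (h.symm.trans h'.symm) hd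
  · refine ⟨((y - B j m).1, j), ⟨m, Or.inr ⟨h.symm, rfl⟩⟩, ?_⟩
    rintro ⟨i', j'⟩ ⟨m', ⟨h', hi⟩ | ⟨h', hi⟩⟩ <;> dsimp only at h' hi
    · obtain ⟨rfl, rfl⟩ := Prod.ext_iff.1 (huniq (j', m') (Or.inl h'.symm))
      exact absurd (h'.trans h) hd
    · obtain ⟨rfl, rfl⟩ := Prod.ext_iff.1 (huniq (j', m') (Or.inr h'.symm))
      rw [← hi]

end Translates

section Labels

-- The walk `0, 1, -1, 2, -2, …, u, -u, u+2, -(u+1), …, 2u+1, -(2u-1)`: its labels are distinct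
-- integers in `[-(2u-1), 2u+1] ∖ {u+1}`, hence distinct and nonzero modulo `4u+1` once shifted by
-- `-(u+1)`, and its `m`-th edge has length `edgeLength u m`.
def cycleLabel (u m : ℕ) : ℤ :=
  if m % 2 = 0 then -((m / 2 : ℕ) : ℤ)
  else if m < 2 * u then ((m / 2 : ℕ) : ℤ) + 1
  else ((m / 2 : ℕ) : ℤ) + 2

def edgeLength (u m : ℕ) : ℕ :=
  if m < 2 * u then m + 1 else if m = 4 * u - 1 then 2 * u + 1 else m + 2

variable {u m : ℕ}

lemma cycleLabel_bounds (hm : m < 4 * u) :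
    -(2 * (u : ℤ)) < cycleLabel u m ∧ cycleLabel u m < 2 * u + 2 ∧
      cycleLabel u m ≠ u + 1 := by
  unfold cycleLabel; split_ifs <;> omega

lemma cycleLabel_injective : Injective (cycleLabel u) := by
  intro m m' h
  unfold cycleLabel at h; split_ifs at h <;> omega

lemma cycleLabel_succ (hm : m < 4 * u) :
    cycleLabel u ((m + 1) % (4 * u)) =
      cycleLabel u m + if m % 2 = 0 then (edgeLength u m : ℤ) else -(edgeLength u m : ℤ) := by
  rcases (show m + 1 < 4 * u ∨ m + 1 = 4 * u by omega) with h | h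
  · rw [Nat.mod_eq_of_lt h]; unfold cycleLabel edgeLength; split_ifs <;> omega
  · rw [h, Nat.mod_self]; unfold cycleLabel edgeLength; split_ifs <;> omega

lemma edgeLength_bounds (hm : m < 4 * u) : 1 ≤ edgeLength u m ∧ edgeLength u m ≤ 4 * u := by
  unfold edgeLength; split_ifs <;> omega

lemma edgeLength_injective : Injective (edgeLength u) := by
  intro m m' h
  unfold edgeLength at h; split_ifs at h <;> omega

end Labels

section ZModLabels

variable {u : ℕ} [NeZero u]

def vertexLabel (u : ℕ) (m : ZMod (4 * u)) : ZMod (4 * u + 1) :=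
  ((cycleLabel u m.val - (u + 1) : ℤ) : ZMod (4 * u + 1))

def edgeLabel (u : ℕ) (m : ZMod (4 * u)) : ZMod (4 * u + 1) :=
  (edgeLength u m.val : ZMod (4 * u + 1))

lemma injective_vertexLabel : Injective (vertexLabel u) := by
  intro m m' h
  obtain ⟨h1, h2, -⟩ := cycleLabel_bounds (m.val_lt)
  obtain ⟨h1', h2', -⟩ := cycleLabel_bounds (m'.val_lt)
  have := ZMod.eq_of_intCast_eq_of_abs_sub_lt h (by rw [abs_sub_lt_iff]; push_cast; omega)
  exact ZMod.val_injective _ (cycleLabel_injective (u := u) (by omega))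

lemma vertexLabel_ne_zero (m : ZMod (4 * u)) : vertexLabel u m ≠ 0 := by
  intro h
  obtain ⟨h1, h2, h3⟩ := cycleLabel_bounds (m.val_lt)
  rw [vertexLabel, ← Int.cast_zero] at h
  have := ZMod.eq_of_intCast_eq_of_abs_sub_lt h (by rw [abs_sub_lt_iff]; push_cast; omega)
  omega

lemma range_vertexLabel : Set.range (vertexLabel u) = {0}ᶜ :=
  Set.range_eq_compl_singleton_of_injective injective_vertexLabel vertexLabel_ne_zero
    (by simp)

lemma injective_edgeLabel : Injective (edgeLabel u) := by
  intro m m' h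
  obtain ⟨-, h2⟩ := edgeLength_bounds (m.val_lt)
  obtain ⟨-, h2'⟩ := edgeLength_bounds (m'.val_lt)
  have := congrArg ZMod.val h
  rw [edgeLabel, edgeLabel, ZMod.val_cast_of_lt (by omega), ZMod.val_cast_of_lt (by omega)] at this
  exact ZMod.val_injective _ (edgeLength_injective this)

lemma edgeLabel_ne_zero (m : ZMod (4 * u)) : edgeLabel u m ≠ 0 := by
  obtain ⟨h1, h2⟩ := edgeLength_bounds (m.val_lt)
  rw [edgeLabel, Ne, ZMod.natCast_eq_zero_iff]
  exact fun h => absurd (Nat.le_of_dvd (by omega) h) (by omega)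

lemma range_edgeLabel : Set.range (edgeLabel u) = {0}ᶜ :=
  Set.range_eq_compl_singleton_of_injective injective_edgeLabel edgeLabel_ne_zero (by simp)

lemma vertexLabel_add_one_sub (m : ZMod (4 * u)) :
    vertexLabel u (m + 1) - vertexLabel u m =
      if m.val % 2 = 0 then edgeLabel u m else -edgeLabel u m := by
  have hu := NeZero.pos u
  rw [vertexLabel, vertexLabel, ZMod.val_add_one_of_one_lt (by omega),
    cycleLabel_succ m.val_lt, edgeLabel]
  split_ifs <;> push_cast <;> ring

end ZModLabels

def level {n : ℕ} {β : Type*} [Zero β] (σ : β) (m : ZMod n) : β :=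
  if m.val % 2 = 0 then 0 else σ

lemma level_add_one_sub {n : ℕ} [NeZero n] (hn : Even n) {β : Type*} [AddCommGroup β]
    (σ : β) (m : ZMod n) :
    level σ (m + 1) - level σ m = if m.val % 2 = 0 then σ else -σ := by
  unfold level
  rw [ZMod.val_add_one_mod_two hn]
  split_ifs <;> first | omega | simp

def halfLabel (τ : ℕ) (s : Fin τ) : ZMod (2 * τ + 1) := ((s : ℕ) + 1 : ℕ)

lemma val_halfLabel {τ : ℕ} (s : Fin τ) : (halfLabel τ s).val = s + 1 :=
  ZMod.val_cast_of_lt (by omega)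

lemma halfLabel_ne_zero {τ : ℕ} (s : Fin τ) : halfLabel τ s ≠ 0 := by
  intro h
  simpa [h] using val_halfLabel s

lemma existsUnique_halfLabel_eq_or_eq_neg {τ : ℕ} {E : ZMod (2 * τ + 1)} (hE : E ≠ 0) :
    ∃! s : Fin τ, halfLabel τ s = E ∨ halfLabel τ s = -E := by
  have hv : 0 < E.val := (ZMod.val_pos).2 hE
  have hlt : E.val < 2 * τ + 1 := E.val_lt
  have key : ∀ s : Fin τ, (halfLabel τ s = E ∨ halfLabel τ s = -E) ↔
      (s.val + 1 = E.val ∨ s.val + 1 = 2 * τ + 1 - E.val) := by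
    intro s
    rw [← (ZMod.val_injective _).eq_iff, ← (ZMod.val_injective _).eq_iff, ZMod.neg_val,
      if_neg hE, val_halfLabel]
  simp only [key]
  refine ⟨⟨if E.val ≤ τ then E.val - 1 else 2 * τ - E.val, by split_ifs <;> omega⟩,
    by dsimp only; split_ifs <;> omega, fun s hs => Fin.ext ?_⟩
  dsimp only
  split_ifs <;> omega

section Factorization

variable {u τ : ℕ} [NeZero u]

def baseWalk (u τ : ℕ) (s : Fin τ) (m : ZMod (4 * u)) :
    ZMod (4 * u + 1) × ZMod (2 * τ + 1) :=
  (vertexLabel u m, level (halfLabel τ s) m)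

lemma baseWalk_add_one_sub (s : Fin τ) (m : ZMod (4 * u)) :
    baseWalk u τ s (m + 1) - baseWalk u τ s m = (edgeLabel u m, halfLabel τ s) ∨
      baseWalk u τ s (m + 1) - baseWalk u τ s m = -(edgeLabel u m, halfLabel τ s) := by
  have h4u : Even (4 * u) := ⟨2 * u, by ring⟩
  simp only [baseWalk, Prod.mk_sub_mk, vertexLabel_add_one_sub, level_add_one_sub h4u]
  split_ifs
  · exact Or.inl rfl
  · exact Or.inr rfl

-- `ZMod (n + 1)` is `Fin (n + 1)` by definition, so these graphs live on the vertices of `tensorK`.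
def factor (u τ : ℕ) (q : ZMod (4 * u + 1) × Fin τ) :
    SimpleGraph (ZMod (4 * u + 1) × ZMod (2 * τ + 1)) :=
  translates (baseWalk u τ q.2) q.1

lemma baseWalk_add_one_sub_ne_zero (s : Fin τ) (m : ZMod (4 * u)) :
    (baseWalk u τ s (m + 1) - baseWalk u τ s m).1 ≠ 0 ∧
      (baseWalk u τ s (m + 1) - baseWalk u τ s m).2 ≠ 0 := by
  rcases baseWalk_add_one_sub s m with h | h <;> rw [h] <;>
    simp [edgeLabel_ne_zero, halfLabel_ne_zero]

lemma factor_le_tensorK (q : ZMod (4 * u + 1) × Fin τ) :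
    factor u τ q ≤ tensorK (4 * u + 1) (2 * τ + 1) := by
  intro x y hxy
  obtain ⟨m, ⟨h, -⟩ | ⟨h, -⟩⟩ := (translates_adj_iff hxy.ne).1 hxy <;>
    obtain ⟨h1, h2⟩ := h ▸ baseWalk_add_one_sub_ne_zero (u := u) q.2 m <;>
    exact ⟨fun e => h1 (by simp [e]), fun e => h2 (by simp [e])⟩

lemma isUnionOfCycles_factor (q : ZMod (4 * u + 1) × Fin τ) :
    IsUnionOfCycles (factor u τ q) {x | x.1 ≠ q.1} (4 * u) := by
  have hu := NeZero.pos u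
  have hrange : Set.range (fun p : ZMod (4 * u) × ZMod (2 * τ + 1) =>
      (q.1, p.2) + baseWalk u τ q.2 p.1) = {x | x.1 ≠ q.1} := by
    rw [range_translate]
    simp only [baseWalk, range_vertexLabel, Set.mem_compl_iff, Set.mem_singleton_iff, sub_eq_zero]
  rw [← hrange]
  exact isUnionOfCycles_cycleUnion (injective_translate injective_vertexLabel q.1) (by omega)

lemma existsUnique_factor_adj {x y : ZMod (4 * u + 1) × ZMod (2 * τ + 1)}
    (hxy : (tensorK (4 * u + 1) (2 * τ + 1)).Adj x y) :
    ∃! q : ZMod (4 * u + 1) × Fin τ, (factor u τ q).Adj x y := by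
  have hd1 : (y - x).1 ≠ 0 := sub_ne_zero.2 (Ne.symm hxy.1)
  have hd2 : (y - x).2 ≠ 0 := sub_ne_zero.2 (Ne.symm hxy.2)
  refine existsUnique_translates_adj (fun h => ZMod.ne_neg_self_of_odd (odd_two_mul_add_one τ)
    hd2 (congrArg Prod.snd h)) ?_ rfl
  simp only [eq_or_eq_neg_iff_of_eq_or_eq_neg (baseWalk_add_one_sub _ _)]
  exact existsUnique_pair_eq_or_eq_neg injective_edgeLabel range_edgeLabel.ge
    (fun E hE => existsUnique_halfLabel_eq_or_eq_neg hE)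
    (fun E hE => ZMod.ne_neg_self_of_odd (odd_two_mul_add_one τ) hE) hd1 hd2

end Factorization

end PartialCycleFactorization

open PartialCycleFactorization in
theorem stmt10_general (k t : ℕ) (hk : 4 ∣ k) (hk0 : 0 < k) (ht : Odd t) :
    ∃ H : Fin ((k + 1) * (t - 1) / 2) → SimpleGraph (Fin (k + 1) × Fin t),
      IsARCS (k + 1) t 1 k ((k + 1) * (t - 1) / 2) H := by
  obtain ⟨u, rfl⟩ := hk
  obtain ⟨τ, rfl⟩ := ht
  have : NeZero u := ⟨by omega⟩
  have hcount : (4 * u + 1) * (2 * τ + 1 - 1) / 2 = (4 * u + 1) * τ := by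
    rw [Nat.add_sub_cancel, mul_left_comm, Nat.mul_div_cancel_left _ two_pos]
  rw [hcount]
  let e : ZMod (4 * u + 1) × Fin τ ≃ Fin ((4 * u + 1) * τ) := finProdFinEquiv
  refine ⟨fun f => factor u τ (e.symm f),
    fun f => ⟨factor_le_tensorK _, _, isUnionOfCycles_factor _⟩,
    fun x y hxy => Set.ncard_eq_one.2 ?_⟩
  obtain ⟨q, hq, huniq⟩ := e.existsUnique_congr_left.1 (existsUnique_factor_adj hxy)
  exact ⟨q, Set.ext fun f => ⟨fun hf => huniq f hf, fun hf => hf ▸ hq⟩⟩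

/-- For `k ≡ 0 (mod 4)` and odd `t ≥ 3`, `K_{k+1} × K_t` has a partial
`C_k`-factorization into `(k+1)(t-1)/2` partial `C_k`-factors. -/
theorem stmt10 (k t : ℕ) (hk : 4 ∣ k) (hk0 : 0 < k) (ht : Odd t) (ht3 : 3 ≤ t) :
    ∃ H : Fin ((k + 1) * (t - 1) / 2) → SimpleGraph (Fin (k + 1) × Fin t),
      IsARCS (k + 1) t 1 k ((k + 1) * (t - 1) / 2) H :=
  stmt10_general k t hk hk0 ht
end

section
/- For even k ≥ 4 and odd t ≥ 3, the tensor product C_k × K_t has a C_{kt}-factorization; in particular, its edge set can be partitioned into t−1 Hamilton cycles. -/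
open SimpleGraph

/-- Tensor (categorical) product of simple graphs. -/
def tensorProd {α β : Type*} (G : SimpleGraph α) (H : SimpleGraph β) :
    SimpleGraph (α × β) where
  Adj x y := G.Adj x.1 y.1 ∧ H.Adj x.2 y.2
  symm := ⟨fun x y h => ⟨G.symm.symm _ _ h.1, H.symm.symm _ _ h.2⟩⟩
  loopless := ⟨fun x h => G.loopless.irrefl x.1 h.1⟩

/-- The cycle graph `C_k` on vertex set `Fin k` (for `k ≥ 3`). -/
def cycleG (k : ℕ) : SimpleGraph (Fin k) :=
  SimpleGraph.fromRel (fun x y => (x.val + 1) % k = y.val)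

/-!
Identify the vertex set with `ℤ/k × ℤ/t`. For a nonzero label `c ∈ ℤ/t` take the permutation
`(x, a) ↦ (x + 1, a + δₓ(c))`, where the level difference `δₓ(c)` (`columnDiff`) is
`c, -c, c, …` on the first `k - 1` columns and `1 - c` (or `1` if `c = 1`) on the last one.
For every column `x`, `c ↦ δₓ(c)` permutes the nonzero residues, so each edge of `C_k × K_t`
between the columns `x` and `x + 1` lies in exactly one of the graphs of these permutations.
As `k ≥ 3` these graphs are 2-regular, and since `k` is even one turn around the columns raises
the level by `c + δ_{k-1}(c) ∈ {1, 2}`, which generates `ℤ/t` because `t` is odd: each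
permutation is a single cycle through all `kt` vertices.
-/

namespace SimpleGraph

variable {V : Type*}

def permGraph (σ : Equiv.Perm V) : SimpleGraph V :=
  fromRel fun x y => σ x = y

variable {σ : Equiv.Perm V}

lemma permGraph_adj {v w : V} : (permGraph σ).Adj v w ↔ v ≠ w ∧ (σ v = w ∨ σ w = v) :=
  Iff.rfl

lemma reachable_permGraph_apply (v : V) : (permGraph σ).Reachable v (σ v) := by
  by_cases h : σ v = v
  · rw [h]
  · exact Adj.reachable (permGraph_adj.2 ⟨Ne.symm h, Or.inl rfl⟩)

lemma reachable_permGraph_iterate (v : V) (n : ℕ) : (permGraph σ).Reachable v (σ^[n] v) := by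
  induction n with
  | zero => rfl
  | succ n ih =>
    rw [Function.iterate_succ_apply']
    exact ih.trans (reachable_permGraph_apply _)

lemma neighborSet_permGraph (h : ∀ v, σ v ≠ v) (v : V) :
    (permGraph σ).neighborSet v = {σ v, σ.symm v} := by
  ext w
  rw [mem_neighborSet, permGraph_adj, Set.mem_insert_iff, Set.mem_singleton_iff,
    Equiv.eq_symm_apply]
  constructor
  · rintro ⟨-, hw | hw⟩
    exacts [Or.inl hw.symm, Or.inr hw]
  · rintro (hw | hw)
    · exact ⟨by rintro rfl; exact h v hw.symm, Or.inl hw.symm⟩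
    · exact ⟨by rintro rfl; exact h v hw, Or.inr hw⟩

lemma ncard_neighborSet_permGraph (h : ∀ v, σ (σ v) ≠ v) (v : V) :
    ((permGraph σ).neighborSet v).ncard = 2 := by
  have hfix : ∀ v, σ v ≠ v := fun v hv => h v (by rw [hv, hv])
  rw [neighborSet_permGraph hfix]
  exact Set.ncard_pair fun heq => h v ((Equiv.eq_symm_apply σ).1 heq)

lemma isUnionOfCycles_permGraph [Finite V] (h : ∀ v, σ (σ v) ≠ v)
    (hconn : (permGraph σ).Connected) :
    IsUnionOfCycles (permGraph σ) Set.univ (Nat.card V) := by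
  refine ⟨fun v => ⟨fun _ => ⟨σ v, ?_⟩, fun _ => trivial⟩,
    fun v _ => ncard_neighborSet_permGraph h v, fun v _ => ?_⟩
  · exact permGraph_adj.2 ⟨fun hv => h v (by rw [← hv, ← hv]), Or.inl rfl⟩
  · have hall : {w | (permGraph σ).Reachable v w} = Set.univ :=
      Set.eq_univ_of_forall fun w => hconn.preconnected v w
    rw [hall, Set.ncard_univ]

end SimpleGraph

section SkewShift

open Fin.NatCast Fin.CommRing

variable {k : ℕ} [NeZero k] {G : Type*} [AddCommGroup G]

lemma Fin.add_one_ne_self (hk : 2 ≤ k) (x : Fin k) : x + 1 ≠ x := by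
  rw [Ne, add_eq_left, Fin.ext_iff, Fin.val_one', Nat.mod_eq_of_lt (by omega)]
  exact one_ne_zero

lemma Fin.add_one_add_one_ne_self (hk : 3 ≤ k) (x : Fin k) : x + 1 + 1 ≠ x := by
  rw [add_assoc, Ne, add_eq_left, Fin.ext_iff, Fin.val_add, Fin.val_one',
    Nat.mod_eq_of_lt (a := 1) (by omega), Nat.mod_eq_of_lt (by omega)]
  exact two_ne_zero

lemma cycleG_adj_iff {x y : Fin k} : (cycleG k).Adj x y ↔ x ≠ y ∧ (y = x + 1 ∨ x = y + 1) := by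
  have hval : ∀ z : Fin k, (z + 1).val = (z.val + 1) % k := fun z => by
    rw [Fin.val_add, Fin.val_one', Nat.add_mod_mod]
  simp only [cycleG, fromRel_adj, Fin.ext_iff, hval, eq_comm]

def skewShift (f : Fin k → G) : Equiv.Perm (Fin k × G) :=
  Equiv.prodShear (Equiv.addRight 1) fun x => Equiv.addRight (f x)

variable (f : Fin k → G)

@[simp]
lemma skewShift_apply (z : Fin k × G) : skewShift f z = (z.1 + 1, z.2 + f z.1) :=
  rfl

lemma skewShift_iterate_zero (a : G) (n : ℕ) :
    (skewShift f)^[n] (0, a) = ((n : Fin k), a + ∑ j ∈ Finset.range n, f j) := by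
  induction n with
  | zero => simp
  | succ n ih =>
    rw [Function.iterate_succ_apply', ih, skewShift_apply, Finset.sum_range_succ, Nat.cast_succ,
      add_assoc]

lemma skewShift_iterate_mul (a : G) (n : ℕ) :
    (skewShift f)^[k * n] (0, a) = (0, a + n • ∑ x, f x) := by
  have hturn : ∀ b, (skewShift f)^[k] (0, b) = (0, b + ∑ x, f x) := fun b => by
    rw [skewShift_iterate_zero, Fin.natCast_self, ← Fin.sum_univ_eq_sum_range (fun j => f j)]
    simp only [Fin.cast_val_eq_self]
  induction n with
  | zero => simp
  | succ n ih =>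
    rw [Function.iterate_mul] at ih ⊢
    rw [Function.iterate_succ_apply', ih, hturn, succ_nsmul, add_assoc]

lemma connected_permGraph_skewShift (hgen : ∀ c : G, ∃ n : ℕ, n • ∑ x, f x = c) :
    (permGraph (skewShift f)).Connected := by
  refine (connected_iff_exists_forall_reachable _).2 ⟨((0 : Fin k), (0 : G)), fun ⟨x, b⟩ => ?_⟩
  obtain ⟨n, hn⟩ := hgen (b - ∑ j ∈ Finset.range x.val, f j)
  have hw : (skewShift f)^[x.val + k * n] (0, 0) = (x, b) := by
    rw [Function.iterate_add_apply, skewShift_iterate_mul, skewShift_iterate_zero,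
      Fin.cast_val_eq_self, zero_add, hn, sub_add_cancel]
  exact hw ▸ reachable_permGraph_iterate _ _

lemma skewShift_skewShift_ne (hk : 3 ≤ k) (z : Fin k × G) : skewShift f (skewShift f z) ≠ z :=
  fun h => Fin.add_one_add_one_ne_self hk z.1 (congrArg Prod.fst h)

lemma permGraph_skewShift_adj_add_one (hk : 3 ≤ k) (x : Fin k) (a b : G) :
    (permGraph (skewShift f)).Adj (x, a) (x + 1, b) ↔ f x = b - a := by
  simp only [permGraph_adj, skewShift_apply, Prod.mk.injEq, ne_eq, eq_sub_iff_add_eq']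
  constructor
  · rintro ⟨-, ⟨-, h⟩ | ⟨h, -⟩⟩
    exacts [h, absurd h (Fin.add_one_add_one_ne_self hk x)]
  · exact fun h => ⟨fun hx => Fin.add_one_ne_self (by omega) x hx.1.symm, Or.inl ⟨trivial, h⟩⟩

lemma permGraph_skewShift_le_tensorProd (hk : 2 ≤ k) (hf : ∀ x, f x ≠ 0) :
    permGraph (skewShift f) ≤ tensorProd (cycleG k) (⊤ : SimpleGraph G) := by
  have hstep : ∀ z, (tensorProd (cycleG k) (⊤ : SimpleGraph G)).Adj z (skewShift f z) :=
    fun z => ⟨cycleG_adj_iff.2 ⟨(Fin.add_one_ne_self hk z.1).symm, Or.inl rfl⟩,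
      by simpa using hf z.1⟩
  rintro v w ⟨-, rfl | rfl⟩
  exacts [hstep v, (hstep w).symm]

end SkewShift

section Labels

open Fin.NatCast Fin.CommRing

variable {t : ℕ} [NeZero t]

lemma Fin.isUnit_two_of_odd (ht : Odd t) : IsUnit (2 : Fin t) := by
  obtain ⟨n, rfl⟩ := ht
  refine IsUnit.of_mul_eq_one ((n + 1 : ℕ) : Fin (2 * n + 1)) ?_
  have h : (2 : Fin (2 * n + 1)) * ((n + 1 : ℕ) : Fin (2 * n + 1)) =
      ((2 * n + 1 : ℕ) : Fin _) + 1 := by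
    push_cast
    ring
  rw [h, Fin.natCast_self, zero_add]

lemma Fin.exists_nsmul_eq_of_isUnit {S : Fin t} (hS : IsUnit S) (c : Fin t) :
    ∃ n : ℕ, n • S = c := by
  obtain ⟨u, rfl⟩ := hS
  refine ⟨(c * ↑u⁻¹ : Fin t).val, ?_⟩
  rw [nsmul_eq_mul, Fin.cast_val_eq_self, mul_assoc, Units.inv_mul, mul_one]

def columnDiff (k j : ℕ) (c : Fin t) : Fin t :=
  if j + 1 = k then (if c = 0 ∨ c = 1 then c else 1 - c) else (-1) ^ j * c

lemma columnDiff_involutive (k j : ℕ) : Function.Involutive (columnDiff (t := t) k j) := by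
  intro c
  unfold columnDiff
  split_ifs with _ hc hc'
  · rfl
  · rcases hc' with h | h
    · exact absurd (Or.inr (sub_eq_zero.1 h).symm) hc
    · exact absurd (Or.inl (sub_eq_self.1 h)) hc
  · exact sub_sub_cancel 1 c
  · rw [← mul_assoc, ← mul_pow, neg_one_mul, neg_neg, one_pow, one_mul]

lemma columnDiff_ne_zero (k j : ℕ) {c : Fin t} (hc : c ≠ 0) : columnDiff k j c ≠ 0 := by
  intro h
  apply hc
  rw [← columnDiff_involutive k j c, h]
  simp [columnDiff]

lemma sum_columnDiff {k : ℕ} (hk : Even k) (hk0 : k ≠ 0) {c : Fin t} (hc : c ≠ 0) :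
    ∑ x : Fin k, columnDiff k x.val c = if c = 1 then 2 else 1 := by
  obtain ⟨n, rfl⟩ := Nat.exists_eq_add_one_of_ne_zero hk0
  have hn : ¬ Even n := by rwa [Nat.even_add_one] at hk
  have hfirst : ∑ j ∈ Finset.range n, columnDiff (n + 1) j c = c := by
    have hcol : ∀ j ∈ Finset.range n, columnDiff (n + 1) j c = (-1) ^ j * c := fun j hj =>
      if_neg (by rw [Finset.mem_range] at hj; omega)
    rw [Finset.sum_congr rfl hcol, ← Finset.sum_mul, neg_one_geom_sum, if_neg hn, one_mul]
  rw [Fin.sum_univ_eq_sum_range (fun j => columnDiff (n + 1) j c), Finset.sum_range_succ,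
    hfirst, columnDiff, if_pos rfl]
  by_cases hc1 : c = 1
  · rw [if_pos (Or.inr hc1), if_pos hc1, hc1, one_add_one_eq_two]
  · rw [if_neg (not_or.2 ⟨hc, hc1⟩), if_neg hc1, add_sub_cancel]

def cycleLabel (m : Fin (t - 1)) : Fin t :=
  ⟨m + 1, Nat.add_lt_of_lt_sub m.isLt⟩

lemma cycleLabel_ne_zero (m : Fin (t - 1)) : cycleLabel m ≠ 0 := by
  simp [cycleLabel, Fin.ext_iff]

lemma ncard_setOf_cycleLabel_eq {c : Fin t} (hc : c ≠ 0) :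
    {m : Fin (t - 1) | cycleLabel m = c}.ncard = 1 := by
  have hc' : c.val ≠ 0 := Fin.val_ne_zero_iff.2 hc
  refine Set.ncard_eq_one.2 ⟨⟨c.val - 1, by omega⟩, Set.ext fun m => ?_⟩
  simp only [Set.mem_ofPred_eq, Set.mem_singleton_iff, cycleLabel, Fin.ext_iff]
  omega

end Labels

section HamiltonCycles

variable (k t : ℕ) [NeZero k] [NeZero t]

def hamiltonCycle (m : Fin (t - 1)) : SimpleGraph (Fin k × Fin t) :=
  permGraph (skewShift fun x => columnDiff k x.val (cycleLabel m))

variable {k t}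

lemma hamiltonCycle_le_tensorProd (hk : 2 ≤ k) (m : Fin (t - 1)) :
    hamiltonCycle k t m ≤ tensorProd (cycleG k) (⊤ : SimpleGraph (Fin t)) :=
  permGraph_skewShift_le_tensorProd _ hk fun x =>
    columnDiff_ne_zero k x.val (cycleLabel_ne_zero m)

lemma isUnionOfCycles_hamiltonCycle (hk : Even k) (hk3 : 3 ≤ k) (ht : Odd t) (m : Fin (t - 1)) :
    IsUnionOfCycles (hamiltonCycle k t m) Set.univ (k * t) := by
  have hturn : IsUnit (∑ x : Fin k, columnDiff k x.val (cycleLabel m)) := by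
    rw [sum_columnDiff hk (NeZero.ne k) (cycleLabel_ne_zero m)]
    split_ifs
    exacts [Fin.isUnit_two_of_odd ht, isUnit_one]
  have hcard : Nat.card (Fin k × Fin t) = k * t := by simp
  rw [← hcard]
  exact isUnionOfCycles_permGraph (skewShift_skewShift_ne _ hk3)
    (connected_permGraph_skewShift _ (Fin.exists_nsmul_eq_of_isUnit hturn))

lemma ncard_setOf_hamiltonCycle_adj_add_one (hk : 3 ≤ k) (x : Fin k) {a b : Fin t}
    (hab : a ≠ b) :
    {m | (hamiltonCycle k t m).Adj (x, a) (x + 1, b)}.ncard = 1 := by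
  have hset : {m | (hamiltonCycle k t m).Adj (x, a) (x + 1, b)} =
      {m | cycleLabel m = columnDiff k x.val (b - a)} := by
    ext m
    rw [Set.mem_ofPred_eq, Set.mem_ofPred_eq, hamiltonCycle, permGraph_skewShift_adj_add_one _ hk,
      (columnDiff_involutive k x.val).eq_iff]
  rw [hset]
  exact ncard_setOf_cycleLabel_eq (columnDiff_ne_zero k x.val (sub_ne_zero.2 hab.symm))

lemma ncard_setOf_hamiltonCycle_adj (hk : 3 ≤ k) {v w : Fin k × Fin t}
    (h : (tensorProd (cycleG k) (⊤ : SimpleGraph (Fin t))).Adj v w) :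
    {m | (hamiltonCycle k t m).Adj v w}.ncard = 1 := by
  obtain ⟨x, a⟩ := v
  obtain ⟨y, b⟩ := w
  obtain ⟨hxy, hab⟩ := h
  obtain ⟨-, rfl | rfl⟩ := cycleG_adj_iff.1 hxy
  · exact ncard_setOf_hamiltonCycle_adj_add_one hk x hab
  · simp_rw [adj_comm (hamiltonCycle k t _) (y + 1, a)]
    exact ncard_setOf_hamiltonCycle_adj_add_one hk y (Ne.symm hab)

end HamiltonCycles

theorem stmt11_general (k t : ℕ) (hk : Even k) (hk4 : 4 ≤ k) (ht : Odd t) :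
    ∃ H : Fin (t - 1) → SimpleGraph (Fin k × Fin t),
      (∀ m, H m ≤ tensorProd (cycleG k) (⊤ : SimpleGraph (Fin t)) ∧
        IsUnionOfCycles (H m) Set.univ (k * t)) ∧
      ∀ x y : Fin k × Fin t,
        (tensorProd (cycleG k) (⊤ : SimpleGraph (Fin t))).Adj x y →
          ({m | (H m).Adj x y} : Set (Fin (t - 1))).ncard = 1 := by
  have : NeZero k := ⟨by omega⟩
  have : NeZero t := ⟨ht.pos.ne'⟩
  exact ⟨hamiltonCycle k t, fun m => ⟨hamiltonCycle_le_tensorProd (by omega) m,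
    isUnionOfCycles_hamiltonCycle hk (by omega) ht m⟩,
    fun _ _ => ncard_setOf_hamiltonCycle_adj (by omega)⟩

/-- For even `k ≥ 4` and odd `t ≥ 3`, the edge set of `C_k × K_t` partitions
into `t - 1` Hamilton cycles (i.e. it has a `C_{kt}`-factorization). -/
theorem stmt11 (k t : ℕ) (hk : Even k) (hk4 : 4 ≤ k) (ht : Odd t) (ht3 : 3 ≤ t) :
    ∃ H : Fin (t - 1) → SimpleGraph (Fin k × Fin t),
      (∀ m, H m ≤ tensorProd (cycleG k) (⊤ : SimpleGraph (Fin t)) ∧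
        IsUnionOfCycles (H m) Set.univ (k * t)) ∧
      ∀ x y : Fin k × Fin t,
        (tensorProd (cycleG k) (⊤ : SimpleGraph (Fin t))).Adj x y →
          ({m | (H m).Adj x y} : Set (Fin (t - 1))).ncard = 1 :=
  stmt11_general k t hk hk4 ht
end

section
/- For k ≡ 0 (mod 4), k ≥ 4, and odd g ≥ 3, the graph K_{k+1} × K_g admits a k-almost resolvable cycle system: its edge set partitions into (k+1)(g−1)/2 partial C_k-factors. -/
open SimpleGraph

/-!
Identify the parts with `ZMod (k + 1)` and the columns with `ZMod g`. Since `4 ∣ k`, the nonzero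
residues mod `k + 1` can be listed cyclically as `P 0, …, P (k - 1)` (the zigzag
`1, 2, -1, 4, -3, …`) so that the signed steps `(-1)^s (P (s + 1) - P s)` also run through every
nonzero residue exactly once. For a part `i` and `1 ≤ d ≤ (g - 1) / 2`, the factor `F(i, d)` joins
`(i + P s, b)` to `(i + P (s + 1), b + (-1)^s d)`; as `k` is even, the column returns to `b` after
`k` steps, so `F(i, d)` is a union of `k`-cycles covering every part but `i`. For an edge with part
difference `c` and column difference `δ`, writing `δ = σ d` with `σ = ±1` fixes `d`, the step `s`
is then the unique one with signed step `σ c`, and comparing `(-1)^s` with `σ` orients the edge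
and so fixes `i`.
-/

open Set Function

namespace TensorARCS

theorem bijOn_compl_singleton_of_injective {α β : Type*} [Finite α] [Finite β] {f : α → β}
    (hf : Injective f) {b : β} (hb : ∀ a, f a ≠ b) (hcard : Nat.card β = Nat.card α + 1) :
    BijOn f univ {b}ᶜ := by
  refine ⟨fun a _ => hb a, hf.injOn, ?_⟩
  rw [SurjOn, image_univ]
  refine (eq_of_subset_of_ncard_le (range_subset_iff.mpr hb) ?_).symm.subset
  rw [ncard_range_of_injective hf, ncard_compl, ncard_singleton, hcard, Nat.add_sub_cancel]

theorem units_int_eq_or_eq_neg (u v : ℤˣ) : u = v ∨ u = -v := by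
  rcases Int.units_eq_one_or u with rfl | rfl <;> rcases Int.units_eq_one_or v with rfl | rfl <;>
    simp

section ZMod

variable {k : ℕ}

theorem eq_of_natCast_eq {a b : ℕ} (ha : a < k) (hb : b < k) (h : (a : ZMod k) = b) : a = b := by
  simpa [ZMod.val_natCast, Nat.mod_eq_of_lt, ha, hb] using congrArg ZMod.val h

theorem natCast_eq_of_eq_or_eq_add {a b : ℕ} (h : a = b ∨ a = b + k) : (a : ZMod k) = b := by
  rcases h with rfl | rfl <;> simp

theorem add_natCast_ne_self {n : ℕ} (h0 : 0 < n) (hk : n < k) (s : ZMod k) : s + n ≠ s := by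
  rw [Ne, add_eq_left, ZMod.natCast_eq_zero_iff]
  exact fun h => (Nat.le_of_dvd h0 h).not_gt hk

theorem val_add_one (hk : 1 < k) (s : ZMod k) :
    (s + 1).val = if s.val + 1 = k then 0 else s.val + 1 := by
  have : Fact (1 < k) := ⟨hk⟩
  have := s.val_lt
  rw [ZMod.val_add, ZMod.val_one]
  split_ifs with h
  · rw [h, Nat.mod_self]
  · exact Nat.mod_eq_of_lt (by omega)

theorem bijOn_natCast_comp_val (hk : 0 < k) {f : ℕ → ℕ} (hf : MapsTo f (Iio k) (Icc 1 k))
    (hinj : InjOn f (Iio k)) : BijOn (fun s : ZMod k => (f s.val : ZMod (k + 1))) univ {0}ᶜ := by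
  have : NeZero k := ⟨hk.ne'⟩
  have hf' (s : ZMod k) : 1 ≤ f s.val ∧ f s.val < k + 1 :=
    (hf (mem_Iio.mpr s.val_lt)).imp_right Nat.lt_succ_of_le
  refine bijOn_compl_singleton_of_injective (fun s t h => ?_) (fun s h => ?_) (by simp)
  · exact ZMod.val_injective k <| hinj (mem_Iio.mpr s.val_lt) (mem_Iio.mpr t.val_lt)
      (eq_of_natCast_eq (hf' s).2 (hf' t).2 h)
  · have := eq_of_natCast_eq (b := 0) (hf' s).2 (by omega) (by simpa using h)
    exact Nat.one_le_iff_ne_zero.mp (hf' s).1 this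

def sgn (s : ZMod k) : ℤˣ := (-1) ^ s.val

theorem sgn_eq_sub_parity (hk : Even k) [NeZero k] (s : ZMod k) :
    (sgn s : ℤ) = ((s + 1).val % 2 : ℕ) - (s.val % 2 : ℕ) := by
  have := s.val_lt
  have hk1 : 1 < k := by have := NeZero.ne k; rcases hk with ⟨m, rfl⟩; omega
  rw [sgn, val_add_one hk1]
  push_cast
  rcases Nat.even_or_odd s.val with hs | hs
  · rw [hs.neg_one_pow]
    rw [Nat.even_iff] at hs
    split_ifs <;> grind
  · rw [hs.neg_one_pow]
    rw [Nat.odd_iff] at hs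
    split_ifs <;> grind

end ZMod

section Factor

variable {k : ℕ} {A B : Type*} [AddCommGroup A] [AddCommGroup B] (P : ZMod k → A) (i : A) (d : B)

def factorRel (x y : A × B) : Prop :=
  ∃ s, x.1 = i + P s ∧ y.1 = i + P (s + 1) ∧ y.2 = x.2 + sgn s • d

def factor : SimpleGraph (A × B) := SimpleGraph.fromRel (factorRel P i d)

def cycleVertex (b : B) (t : ZMod k) : A × B := (i + P t, b + (t.val % 2) • d)

variable {P i d}

theorem factorRel_left_unique (hP : Injective P) {x y y' : A × B} (h : factorRel P i d x y)
    (h' : factorRel P i d x y') : y = y' := by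
  obtain ⟨t, hx, hy, hy₂⟩ := h
  obtain ⟨t', hx', hy', hy₂'⟩ := h'
  obtain rfl : t = t' := hP (add_left_cancel (hx.symm.trans hx'))
  exact Prod.ext (hy.trans hy'.symm) (hy₂.trans hy₂'.symm)

theorem factorRel_right_unique (hP : Injective P) {x y y' : A × B} (h : factorRel P i d y x)
    (h' : factorRel P i d y' x) : y = y' := by
  obtain ⟨t, hy, hx, hx₂⟩ := h
  obtain ⟨t', hy', hx', hx₂'⟩ := h'
  obtain rfl : t = t' := add_right_cancel (hP (add_left_cancel (hx.symm.trans hx')))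
  exact Prod.ext (hy.trans hy'.symm) (add_right_cancel (hx₂.symm.trans hx₂'))

theorem factorRel_cycleVertex (hk : Even k) [NeZero k] (b : B) (t : ZMod k) :
    factorRel P i d (cycleVertex P i d b t) (cycleVertex P i d b (t + 1)) := by
  refine ⟨t, rfl, rfl, ?_⟩
  simp only [cycleVertex]
  rw [Units.smul_def, sgn_eq_sub_parity hk]
  module

theorem factorRel_cycleVertex_left_iff (hk : Even k) [NeZero k] (hP : Injective P) {b : B}
    {s : ZMod k} {y : A × B} :
    factorRel P i d (cycleVertex P i d b s) y ↔ y = cycleVertex P i d b (s + 1) :=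
  ⟨fun h => factorRel_left_unique hP h (factorRel_cycleVertex hk b s),
    fun h => h ▸ factorRel_cycleVertex hk b s⟩

theorem factorRel_cycleVertex_right_iff (hk : Even k) [NeZero k] (hP : Injective P) {b : B}
    {s : ZMod k} {y : A × B} :
    factorRel P i d y (cycleVertex P i d b s) ↔ y = cycleVertex P i d b (s - 1) := by
  have h := factorRel_cycleVertex (P := P) (i := i) (d := d) hk b (s - 1)
  rw [sub_add_cancel] at h
  exact ⟨fun h' => factorRel_right_unique hP h' h, fun h' => h' ▸ h⟩

theorem factor_adj_cycleVertex_iff (hk : Even k) (hk2 : 2 < k) (hP : Injective P) {b : B}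
    {s : ZMod k} {y : A × B} :
    (factor P i d).Adj (cycleVertex P i d b s) y ↔
      y = cycleVertex P i d b (s + 1) ∨ y = cycleVertex P i d b (s - 1) := by
  have : NeZero k := ⟨by omega⟩
  have hne (t : ZMod k) (ht : t ≠ s) : cycleVertex P i d b s ≠ cycleVertex P i d b t :=
    fun h => ht (hP (add_left_cancel (congrArg Prod.fst h))).symm
  rw [factor, SimpleGraph.fromRel_adj, factorRel_cycleVertex_left_iff hk hP,
    factorRel_cycleVertex_right_iff hk hP]
  refine ⟨And.right, fun h => ⟨?_, h⟩⟩
  rcases h with rfl | rfl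
  · exact hne _ (by exact_mod_cast add_natCast_ne_self one_pos (by omega) s)
  · refine hne _ fun h => add_natCast_ne_self one_pos (by omega) (s - 1) ?_
    rwa [Nat.cast_one, sub_add_cancel, eq_comm]

theorem exists_eq_cycleVertex (hP : SurjOn P univ {0}ᶜ) {x : A × B} (hx : x.1 ≠ i) :
    ∃ b s, x = cycleVertex P i d b s := by
  obtain ⟨s, -, hs⟩ := hP (sub_ne_zero.mpr hx)
  exact ⟨x.2 - (s.val % 2) • d, s, Prod.ext (by simp [cycleVertex, hs]) (by simp [cycleVertex])⟩

theorem fst_ne_of_factor_adj (hP : ∀ s, P s ≠ 0) {x y : A × B} (h : (factor P i d).Adj x y) :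
    x.1 ≠ i := by
  rcases h.2 with ⟨s, hx, -, -⟩ | ⟨s, -, hx, -⟩ <;> rw [hx] <;> simpa using hP _

theorem reachable_cycleVertex_iff (hk : Even k) (hk2 : 2 < k) (hP : Injective P) {b : B}
    {s : ZMod k} {y : A × B} :
    (factor P i d).Reachable (cycleVertex P i d b s) y ↔ y ∈ range (cycleVertex P i d b) := by
  have : NeZero k := ⟨by omega⟩
  constructor
  · rw [SimpleGraph.reachable_iff_reflTransGen]
    intro h
    induction h with
    | refl => exact mem_range_self s
    | tail _ hadj ih =>
      obtain ⟨t, rfl⟩ := ih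
      rcases (factor_adj_cycleVertex_iff hk hk2 hP).mp hadj with rfl | rfl <;>
        exact mem_range_self _
  · rintro ⟨t, rfl⟩
    have hstep (n : ℕ) :
        (factor P i d).Reachable (cycleVertex P i d b s) (cycleVertex P i d b (s + n)) := by
      induction n with
      | zero => simp
      | succ n ih =>
        refine ih.trans (SimpleGraph.Adj.reachable ?_)
        rw [factor_adj_cycleVertex_iff hk hk2 hP, Nat.cast_succ, add_assoc]
        exact Or.inl rfl
    simpa using hstep (t - s).val

theorem isUnionOfCycles_factor (hk : Even k) (hk2 : 2 < k) (hP : BijOn P univ {0}ᶜ) :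
    IsUnionOfCycles (factor P i d) {x | x.1 ≠ i} k := by
  have : NeZero k := ⟨by omega⟩
  have hinj : Injective P := injOn_univ.mp hP.injOn
  refine ⟨fun x => ⟨fun hx => ?_, fun ⟨y, hy⟩ => fst_ne_of_factor_adj (hP.mapsTo <| mem_univ ·) hy⟩,
    fun x hx => ?_, fun x hx => ?_⟩ <;>
    obtain ⟨b, s, rfl⟩ := exists_eq_cycleVertex (d := d) hP.surjOn hx
  · exact ⟨_, (factor_adj_cycleVertex_iff hk hk2 hinj).mpr (Or.inl rfl)⟩
  · have hne : cycleVertex P i d b (s + 1) ≠ cycleVertex P i d b (s - 1) := fun h =>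
      add_natCast_ne_self two_pos hk2 (s - 1)
        (by push_cast; linear_combination hinj (add_left_cancel (congrArg Prod.fst h)))
    rw [← ncard_pair hne]
    congr 1
    ext y
    exact factor_adj_cycleVertex_iff hk hk2 hinj
  · have hcyc : Injective (cycleVertex P i d b) :=
      fun s t h => hinj (add_left_cancel (congrArg Prod.fst h))
    simp_rw [reachable_cycleVertex_iff hk hk2 hinj, ofPred_mem_eq, ncard_range_of_injective hcyc,
      Nat.card_zmod]

theorem factor_adj_ne (hk : 1 < k) (hP : Injective P) (hd : d ≠ 0) {x y : A × B}
    (h : (factor P i d).Adj x y) : x.1 ≠ y.1 ∧ x.2 ≠ y.2 := by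
  suffices ∀ {x y}, factorRel P i d x y → x.1 ≠ y.1 ∧ x.2 ≠ y.2 by
    rcases h.2 with h | h
    · exact this h
    · exact (this h).imp Ne.symm Ne.symm
  rintro x y ⟨s, hx, hy, hy₂⟩
  refine ⟨fun h => add_natCast_ne_self one_pos hk s ?_, fun h => ?_⟩
  · exact_mod_cast hP (add_left_cancel (hy.symm.trans (h.symm.trans hx)))
  · rw [h, left_eq_add, smul_eq_zero_iff_eq] at hy₂
    exact hd hy₂

end Factor

section Edges

variable {k : ℕ} {A B ι : Type*} [AddCommGroup A] [AddCommGroup B] {P : ZMod k → A} {d : ι → B}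

theorem factor_adj_iff_of_sgn_eq (hD : Injective fun s => sgn s • (P (s + 1) - P s))
    (hd : Injective fun p : ℤˣ × ι => p.1 • d p.2) {x y : A × B} (hxy : x ≠ y) {σ : ℤˣ} {j₀ : ι}
    {s₀ : ZMod k} (hσ : σ • d j₀ = y.2 - x.2) (hs₀ : sgn s₀ • (P (s₀ + 1) - P s₀) = σ • (y.1 - x.1))
    (hsgn : sgn s₀ = σ) (p : A × ι) :
    (factor P p.1 (d p.2)).Adj x y ↔ p = (x.1 - P s₀, j₀) := by
  rw [hsgn, smul_left_cancel_iff] at hs₀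
  constructor
  · rintro ⟨-, ⟨s, hx, hy, hy₂⟩ | ⟨s, hy, hx, hx₂⟩⟩
    · obtain ⟨rfl, rfl⟩ : sgn s = σ ∧ p.2 = j₀ := Prod.ext_iff.mp <| @hd (sgn s, p.2) (σ, j₀) <|
        show sgn s • d p.2 = σ • d j₀ by rw [hσ, hy₂, add_sub_cancel_left]
      obtain rfl : s = s₀ := @hD s s₀ <|
        show sgn s • (P (s + 1) - P s) = sgn s₀ • (P (s₀ + 1) - P s₀) by
          rw [hsgn, hs₀, hx, hy, add_sub_add_left_eq_sub]
      exact Prod.ext (eq_sub_of_add_eq hx.symm) rfl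
    · obtain ⟨hs, rfl⟩ : -sgn s = σ ∧ p.2 = j₀ := Prod.ext_iff.mp <| @hd (-sgn s, p.2) (σ, j₀) <|
        show (-sgn s) • d p.2 = σ • d j₀ by rw [hσ, hx₂, Units.neg_smul]; abel
      obtain rfl : s = s₀ := @hD s s₀ <|
        show sgn s • (P (s + 1) - P s) = sgn s₀ • (P (s₀ + 1) - P s₀) by
          rw [hsgn, hs₀, hx, hy, add_sub_add_left_eq_sub, ← hs, Units.neg_smul, ← smul_neg, neg_sub]
      exact absurd (hsgn.trans hs.symm) (units_ne_neg_self _)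
  · rintro rfl
    refine ⟨hxy, Or.inl ⟨s₀, (sub_add_cancel _ _).symm, ?_, ?_⟩⟩
    · dsimp only
      rw [add_comm_sub, hs₀]
      abel
    · rw [hsgn, hσ]
      abel

theorem existsUnique_factor_adj (hD : BijOn (fun s => sgn s • (P (s + 1) - P s)) univ {0}ᶜ)
    (hd : BijOn (fun p : ℤˣ × ι => p.1 • d p.2) univ {0}ᶜ) {x y : A × B} (h₁ : x.1 ≠ y.1)
    (h₂ : x.2 ≠ y.2) : ∃! p : A × ι, (factor P p.1 (d p.2)).Adj x y := by
  have hDinj := injOn_univ.mp hD.injOn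
  have hdinj := injOn_univ.mp hd.injOn
  obtain ⟨⟨σ, j₀⟩, -, hσ⟩ := hd.surjOn (sub_ne_zero.mpr h₂.symm)
  obtain ⟨s₀, -, hs₀⟩ := hD.surjOn ((smul_ne_zero_iff_ne σ).mpr (sub_ne_zero.mpr h₁.symm))
  suffices ∃ p₀, ∀ p : A × ι, (factor P p.1 (d p.2)).Adj x y ↔ p = p₀ by
    obtain ⟨p₀, hp₀⟩ := this
    exact ⟨p₀, (hp₀ p₀).mpr rfl, fun p => (hp₀ p).mp⟩
  rcases units_int_eq_or_eq_neg (sgn s₀) σ with hsgn | hsgn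
  · exact ⟨_, factor_adj_iff_of_sgn_eq hDinj hdinj (fun h => h₁ (congrArg Prod.fst h))
      hσ hs₀ hsgn⟩
  -- Otherwise the edge runs from `y` to `x`, with column difference `(-σ) • d j₀`.
  · refine ⟨_, fun p => SimpleGraph.adj_comm _ _ _ |>.trans <|
      factor_adj_iff_of_sgn_eq hDinj hdinj (fun h => h₁ (congrArg Prod.fst h).symm)
        (σ := -σ) (j₀ := j₀) ?_ ?_ hsgn p⟩
    · simp only [Units.neg_smul, hσ, neg_sub]
    · simp only [hs₀, Units.neg_smul, ← smul_neg, neg_sub]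

end Edges

section Zigzag

variable {k v : ℕ}

/-- The residues `1, 2, -1, 4, -3, …, 1 - k/2, k/2 + 1, -(k/2 + 2), …, -2` mod `k + 1`, that is
`[v ≤ k/2] - (-1)^v v`, as representatives in `1, …, k`. -/
def zigzagNat (k v : ℕ) : ℕ :=
  if v = 0 then 1
  else if v % 2 = 1 then (if v ≤ k / 2 then v + 1 else v)
  else if v ≤ k / 2 then k + 2 - v else k + 1 - v

def zigzagStepNat (k v : ℕ) : ℕ :=
  if v = k / 2 then k else if v < k / 2 then 2 * v + 1 else 2 * v - k

theorem zigzagNat_mapsTo (hk : 4 ∣ k) : MapsTo (zigzagNat k) (Iio k) (Icc 1 k) := by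
  intro v hv
  simp only [mem_Iio, mem_Icc, zigzagNat] at hv ⊢
  split_ifs <;> omega

theorem zigzagNat_injOn (hk : 4 ∣ k) : InjOn (zigzagNat k) (Iio k) := by
  intro v hv w hw h
  simp only [mem_Iio, zigzagNat] at hv hw h
  split_ifs at h <;> omega

theorem zigzagStepNat_mapsTo (hk : 4 ∣ k) : MapsTo (zigzagStepNat k) (Iio k) (Icc 1 k) := by
  intro v hv
  simp only [mem_Iio, mem_Icc, zigzagStepNat] at hv ⊢
  split_ifs <;> omega

theorem zigzagStepNat_injOn (hk : 4 ∣ k) : InjOn (zigzagStepNat k) (Iio k) := by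
  intro v hv w hw h
  simp only [mem_Iio, zigzagStepNat] at hv hw h
  split_ifs at h <;> omega

theorem zigzagNat_succ_of_even (hk : 4 ∣ k) (hv : v < k) (he : v % 2 = 0) :
    ((zigzagStepNat k v + zigzagNat k v : ℕ) : ZMod (k + 1)) = zigzagNat k (v + 1) :=
  natCast_eq_of_eq_or_eq_add <| by
    unfold zigzagNat zigzagStepNat; split_ifs <;> first | contradiction | omega

theorem zigzagNat_succ_of_odd (hk : 4 ∣ k) (hv : v < k) (ho : v % 2 = 1) :
    ((zigzagStepNat k v + zigzagNat k (if v + 1 = k then 0 else v + 1) : ℕ) : ZMod (k + 1)) =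
      zigzagNat k v :=
  natCast_eq_of_eq_or_eq_add <| by
    unfold zigzagNat zigzagStepNat; split_ifs <;> first | contradiction | omega

def zigzag (k : ℕ) (s : ZMod k) : ZMod (k + 1) := zigzagNat k s.val

variable (hk : 4 ∣ k) (hk0 : 0 < k)
include hk hk0

theorem zigzag_bijOn : BijOn (zigzag k) univ {0}ᶜ :=
  bijOn_natCast_comp_val hk0 (zigzagNat_mapsTo hk) (zigzagNat_injOn hk)

theorem sgn_smul_zigzag_succ_sub (s : ZMod k) :
    sgn s • (zigzag k (s + 1) - zigzag k s) = zigzagStepNat k s.val := by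
  have : NeZero k := ⟨hk0.ne'⟩
  have hs := s.val_lt
  rw [sgn, zigzag, zigzag, val_add_one (by omega), Units.smul_def, zsmul_eq_mul]
  push_cast
  rcases Nat.even_or_odd s.val with he | ho
  · rw [he.neg_one_pow, one_mul, if_neg (by rw [Nat.even_iff] at he; omega), sub_eq_iff_eq_add,
      ← zigzagNat_succ_of_even hk hs (Nat.even_iff.mp he), Nat.cast_add]
  · rw [ho.neg_one_pow, neg_one_mul, neg_sub, sub_eq_iff_eq_add,
      ← zigzagNat_succ_of_odd hk hs (Nat.odd_iff.mp ho), Nat.cast_add]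

theorem zigzag_step_bijOn : BijOn (fun s => sgn s • (zigzag k (s + 1) - zigzag k s)) univ {0}ᶜ := by
  simp_rw [sgn_smul_zigzag_succ_sub hk hk0]
  exact bijOn_natCast_comp_val hk0 (zigzagStepNat_mapsTo hk) (zigzagStepNat_injOn hk)

end Zigzag

def halfSystem (g : ℕ) (j : Fin ((g - 1) / 2)) : ZMod g := ((j + 1 : ℕ) : ZMod g)

theorem halfSystem_bijOn {g : ℕ} (hg : Odd g) :
    BijOn (fun p : ℤˣ × Fin ((g - 1) / 2) => p.1 • halfSystem g p.2) univ {0}ᶜ := by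
  obtain ⟨m, hm⟩ := hg
  have hinj (i j : Fin ((g - 1) / 2)) (h : halfSystem g i = halfSystem g j) : i = j :=
    Fin.ext (by have := eq_of_natCast_eq (a := i + 1) (b := j + 1) (by omega) (by omega) h; omega)
  have hneg (i j : Fin ((g - 1) / 2)) : halfSystem g i ≠ -halfSystem g j := fun h => by
    rw [eq_neg_iff_add_eq_zero, halfSystem, halfSystem, ← Nat.cast_add, ← Nat.cast_zero] at h
    have := eq_of_natCast_eq (by omega) (by omega) h
    omega
  have hne (j : Fin ((g - 1) / 2)) : halfSystem g j ≠ 0 := fun h => by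
    rw [halfSystem, ← Nat.cast_zero] at h
    have := eq_of_natCast_eq (by omega) (by omega) h
    omega
  have : NeZero g := ⟨by omega⟩
  refine bijOn_compl_singleton_of_injective ?_ ?_ ?_
  · rintro ⟨σ, i⟩ ⟨τ, j⟩ h
    rcases Int.units_eq_one_or σ with rfl | rfl <;> rcases Int.units_eq_one_or τ with rfl | rfl <;>
      simp only [one_smul, Units.neg_smul, neg_inj] at h
    · rw [hinj i j h]
    · exact absurd h (hneg i j)
    · exact absurd h.symm (hneg j i)
    · rw [hinj i j h]
  · rintro ⟨σ, j⟩
    rcases Int.units_eq_one_or σ with rfl | rfl <;> simpa using hne j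
  · simp [Nat.card_eq_fintype_card, Fintype.card_units_int]
    omega

end TensorARCS

open TensorARCS in
theorem stmt17_general (k g : ℕ) (hk : 4 ∣ k) (hk0 : 0 < k) (hg : Odd g) :
    ∃ H : Fin ((k + 1) * (g - 1) / 2) → SimpleGraph (Fin (k + 1) × Fin g),
      IsARCS (k + 1) g 1 k ((k + 1) * (g - 1) / 2) H := by
  -- As a successor, `g + 1` makes `ZMod (g + 1)` reduce to `Fin (g + 1)`, so the factors below,
  -- graphs on `ZMod (k + 1) × ZMod (g + 1)`, live on the vertex type of the statement.
  obtain ⟨g, rfl⟩ : ∃ g', g = g' + 1 := ⟨g - 1, by obtain ⟨m, rfl⟩ := hg; omega⟩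
  let F (p : ZMod (k + 1) × Fin ((g + 1 - 1) / 2)) : SimpleGraph (ZMod (k + 1) × ZMod (g + 1)) :=
    factor (zigzag k) p.1 (halfSystem (g + 1) p.2)
  have hP := zigzag_bijOn hk hk0
  have hd := halfSystem_bijOn hg
  have hcycles (p) : IsUnionOfCycles (F p) {x | x.1 ≠ p.1} k :=
    isUnionOfCycles_factor (even_iff_two_dvd.mpr ((by norm_num : 2 ∣ 4).trans hk)) (by omega) hP
  have hedge (p) {x y} (h : (F p).Adj x y) : x.1 ≠ y.1 ∧ x.2 ≠ y.2 :=
    factor_adj_ne (by omega) (injOn_univ.mp hP.injOn)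
      (by simpa using hd.mapsTo (mem_univ (1, p.2))) h
  have hunique {x y : ZMod (k + 1) × ZMod (g + 1)} (h₁ : x.1 ≠ y.1) (h₂ : x.2 ≠ y.2) :
      ∃! p, (F p).Adj x y :=
    existsUnique_factor_adj (zigzag_step_bijOn hk hk0) hd h₁ h₂
  let E : Fin ((k + 1) * (g + 1 - 1) / 2) ≃ ZMod (k + 1) × Fin ((g + 1 - 1) / 2) :=
    (finCongr (Nat.mul_div_assoc _ (Nat.Odd.sub_odd hg odd_one).two_dvd)).trans
      finProdFinEquiv.symm
  refine ⟨fun m => F (E m), fun m => ⟨fun x y => hedge _, _, hcycles _⟩, fun x y hxy => ?_⟩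
  obtain ⟨p₀, hp₀, huniq⟩ := hunique hxy.1 hxy.2
  refine ncard_eq_one.mpr ⟨E.symm p₀, ext fun m => ⟨fun h => E.eq_symm_apply.mpr (huniq _ h), ?_⟩⟩
  rintro rfl
  show (F (E (E.symm p₀))).Adj x y
  rwa [E.apply_symm_apply]

/-- For `k ≡ 0 (mod 4)` and odd `g ≥ 3`, the graph `K_{k+1} × K_g` has a
`k`-ARCS: its edge set partitions into `(k+1)(g-1)/2` partial `C_k`-factors. -/
theorem stmt17 (k g : ℕ) (hk : 4 ∣ k) (hk0 : 0 < k) (hg : Odd g) (hg3 : 3 ≤ g) :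
    ∃ H : Fin ((k + 1) * (g - 1) / 2) → SimpleGraph (Fin (k + 1) × Fin g),
      IsARCS (k + 1) g 1 k ((k + 1) * (g - 1) / 2) H :=
  stmt17_general k g hk hk0 hg
end
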